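/- arXiv:2411.09059 — 3 statements merged into one kernel-verified Lean document; each statement's English description precedes it below -/
import Mathlib

section
/- Let H be a multigraph on vertex set U_low, where for each set S in a family F̂ and each pair of distinct elements e, e' ∈ S ∩ U_low there is one edge (e,e') for each such set containing both. Then for any maximal matching M of H, we have (|U_low| - SC(U_low, F̂))/2 ≤ |M| ≤ |U_low| - SC(U_low, F̂), where SC(U_low, F̂) is the minimum number of sets of F̂ needed to cover U_low (assuming every element of U_low is contained in at least one set, e.g., singletons are available). -/
/-!
Let `V` be the set of vertices covered by the maximal matching `M`, so `|V| = 2|M|`, and let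
`W = U \ V`. By maximality no set of `F` contains two distinct vertices of `W`, so any cover of `U`
needs a separate set for each of them: `|W| ≤ SC`. Conversely, the sets witnessing the edges of
`M` together with one set through each vertex of `W` cover `U`, so `SC ≤ |W| + |M|`. Both bounds
follow from `|U| = |W| + 2|M|`.
-/

open Finset

section

variable {α : Type*} [DecidableEq α]

def matchedVertices (M : Finset (α × α × Finset α)) : Finset α :=
  M.biUnion fun x => {x.1, x.2.1}

lemma mem_matchedVertices {M : Finset (α × α × Finset α)} {v : α} :
    v ∈ matchedVertices M ↔ ∃ x ∈ M, v ∈ ({x.1, x.2.1} : Finset α) :=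
  mem_biUnion

lemma matchedVertices_subset {M : Finset (α × α × Finset α)} {U : Finset α}
    (hM : ∀ x ∈ M, x.1 ∈ U ∧ x.2.1 ∈ U) : matchedVertices M ⊆ U := by
  intro v hv
  obtain ⟨x, hx, hvx⟩ := mem_matchedVertices.mp hv
  rcases mem_insert.mp hvx with rfl | hv
  · exact (hM x hx).1
  · exact mem_singleton.mp hv ▸ (hM x hx).2

lemma card_matchedVertices {M : Finset (α × α × Finset α)} (hne : ∀ x ∈ M, x.1 ≠ x.2.1)
    (hdisj : ∀ x ∈ M, ∀ y ∈ M, x ≠ y →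
      ({x.1, x.2.1} : Finset α) ∩ ({y.1, y.2.1} : Finset α) = ∅) :
    #(matchedVertices M) = 2 * #M := by
  rw [matchedVertices, card_biUnion fun x hx y hy hxy =>
    disjoint_iff_inter_eq_empty.mpr (hdisj x hx y hy hxy)]
  rw [sum_congr rfl fun x hx => card_pair (hne x hx), sum_const, smul_eq_mul, mul_comm]

lemma card_sdiff_matchedVertices_le {U : Finset α} {F G : Finset (Finset α)}
    {M : Finset (α × α × Finset α)}
    (hmax : ∀ S ∈ F, ∀ e ∈ S ∩ U, ∀ e' ∈ S ∩ U, e ≠ e' →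
      (∀ x ∈ M, e ∉ ({x.1, x.2.1} : Finset α) ∧ e' ∉ ({x.1, x.2.1} : Finset α)) → False)
    (hGF : G ⊆ F) (hGcov : ∀ e ∈ U, ∃ S ∈ G, e ∈ S) :
    #(U \ matchedVertices M) ≤ #G := by
  have unmatched {w} (hw : w ∈ U \ matchedVertices M) (x) (hx : x ∈ M) :
      w ∉ ({x.1, x.2.1} : Finset α) := fun hwx =>
    (mem_sdiff.mp hw).2 (mem_matchedVertices.mpr ⟨x, hx, hwx⟩)
  refine card_le_card_of_forall_subsingleton (· ∈ ·)
    (fun w hw => hGcov w (mem_sdiff.mp hw).1) fun S hS w hw w' hw' => ?_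
  by_contra hne
  exact hmax S (hGF hS) w (mem_inter.mpr ⟨hw.2, (mem_sdiff.mp hw.1).1⟩)
    w' (mem_inter.mpr ⟨hw'.2, (mem_sdiff.mp hw'.1).1⟩) hne
    fun x hx => ⟨unmatched hw.1 x hx, unmatched hw'.1 x hx⟩

lemma exists_cover_card_le {U : Finset α} {F : Finset (Finset α)}
    {M : Finset (α × α × Finset α)} (hcov : ∀ e ∈ U, ∃ S ∈ F, e ∈ S)
    (hM : ∀ x ∈ M, x.2.2 ∈ F ∧ x.1 ∈ x.2.2 ∧ x.2.1 ∈ x.2.2) :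
    ∃ G ⊆ F, #G ≤ #(U \ matchedVertices M) + #M ∧ ∀ e ∈ U, ∃ S ∈ G, e ∈ S := by
  choose! f hfF hf using hcov
  refine ⟨(U \ matchedVertices M).image f ∪ M.image (·.2.2), ?_, ?_, ?_⟩
  · refine union_subset (fun S hS => ?_) fun S hS => ?_
    · obtain ⟨w, hw, rfl⟩ := mem_image.mp hS
      exact hfF w (mem_sdiff.mp hw).1
    · obtain ⟨x, hx, rfl⟩ := mem_image.mp hS
      exact (hM x hx).1
  · exact (card_union_le _ _).trans (add_le_add card_image_le card_image_le)
  · intro e he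
    by_cases hev : e ∈ matchedVertices M
    · obtain ⟨x, hx, hex⟩ := mem_matchedVertices.mp hev
      refine ⟨x.2.2, mem_union_right _ (mem_image_of_mem _ hx), ?_⟩
      rcases mem_insert.mp hex with rfl | he
      · exact (hM x hx).2.1
      · exact mem_singleton.mp he ▸ (hM x hx).2.2
    · exact ⟨f e, mem_union_left _ (mem_image_of_mem _ (mem_sdiff.mpr ⟨he, hev⟩)), hf e he⟩

end

/-- For the auxiliary multigraph `H` on `U` built from the set family `F`
(one edge per set containing two distinct elements of `U`), any maximal matching `M`
(represented as a set of triples `(e, e', S)` : the two endpoints and the witnessing set)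
satisfies `(|U| - SC(U,F))/2 ≤ |M| ≤ |U| - SC(U,F)`. -/
theorem stmt0 {α : Type*} [DecidableEq α] (U : Finset α) (F : Finset (Finset α))
    (hcov : ∀ e ∈ U, ∃ S ∈ F, e ∈ S)
    (sc : ℕ)
    (hsc : IsLeast {m : ℕ | ∃ G ⊆ F, G.card = m ∧ ∀ e ∈ U, ∃ S ∈ G, e ∈ S} sc)
    (M : Finset (α × α × Finset α))
    (hM : ∀ x ∈ M, x.2.2 ∈ F ∧ x.1 ∈ x.2.2 ∧ x.2.1 ∈ x.2.2 ∧
      x.1 ∈ U ∧ x.2.1 ∈ U ∧ x.1 ≠ x.2.1)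
    (hdisj : ∀ x ∈ M, ∀ y ∈ M, x ≠ y →
      ({x.1, x.2.1} : Finset α) ∩ ({y.1, y.2.1} : Finset α) = ∅)
    (hmax : ∀ S ∈ F, ∀ e ∈ S ∩ U, ∀ e' ∈ S ∩ U, e ≠ e' →
      (∀ x ∈ M, e ∉ ({x.1, x.2.1} : Finset α) ∧ e' ∉ ({x.1, x.2.1} : Finset α)) → False) :
    U.card ≤ sc + 2 * M.card ∧ M.card + sc ≤ U.card := by
  obtain ⟨⟨G, hGF, rfl, hGcov⟩, hleast⟩ := hsc
  have hVU : matchedVertices M ⊆ U :=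
    matchedVertices_subset fun x hx => ⟨(hM x hx).2.2.2.1, (hM x hx).2.2.2.2.1⟩
  have hU : #(U \ matchedVertices M) + 2 * #M = #U := by
    rw [← card_matchedVertices (fun x hx => (hM x hx).2.2.2.2.2) hdisj,
      card_sdiff_add_card_eq_card hVU]
  have hlower := card_sdiff_matchedVertices_le hmax hGF hGcov
  obtain ⟨G', hG'F, hG'card, hG'cov⟩ :=
    exists_cover_card_le hcov fun x hx => ⟨(hM x hx).1, (hM x hx).2.1, (hM x hx).2.2.1⟩
  have hupper : #G ≤ #G' := hleast ⟨G', hG'F, rfl, hG'cov⟩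
  constructor <;> omega
end

section
/- Let H be a multigraph, π a permutation of its edges, and consider the edge oracle EO(e, v, π) which recursively queries the incident edges of e at endpoint v with rank smaller than π(e) in increasing rank order, returning true iff none of them recursively returns true (i.e., e is in the greedy maximal matching). Then EO(e, v, π) = true if and only if e belongs to the greedy maximal matching of H with respect to π. -/
/-- Two edges of the multigraph (edge indices with endpoint map `ends`) share an endpoint. -/
def Shares {V E : Type*} (ends : E → V × V) (e f : E) : Prop :=
  (ends e).1 = (ends f).1 ∨ (ends e).1 = (ends f).2 ∨
  (ends e).2 = (ends f).1 ∨ (ends e).2 = (ends f).2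

/-- Incidence between distinct edges of a multigraph. -/
def Incident {V E : Type*} (ends : E → V × V) (e f : E) : Prop :=
  e ≠ f ∧ Shares ends e f

theorem WellFounded.iff_of_iff_forall_not {α : Type*} {r : α → α → Prop} (hr : WellFounded r)
    {P Q : α → Prop} (hP : ∀ a, P a ↔ ∀ b, r b a → ¬ P b)
    (hQ : ∀ a, Q a ↔ ∀ b, r b a → ¬ Q b) (a : α) : P a ↔ Q a := by
  induction a using hr.induction with
  | _ a ih =>
    rw [hP, hQ]
    exact forall_congr' fun b => imp_congr_right fun hb => not_congr (ih b hb)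

theorem stmt3_general {V E : Type*} (ends : E → V × V) (π : E → ℕ)
    (EO : E → Prop)
    (hEO : ∀ e, EO e ↔ ∀ f, Incident ends e f → π f < π e → ¬ EO f)
    (M : Set E)
    (hM : ∀ e, e ∈ M ↔ ∀ f, Incident ends e f → π f < π e → f ∉ M) :
    ∀ e, EO e ↔ e ∈ M := by
  have hwf : WellFounded fun f e => Incident ends e f ∧ π f < π e :=
    Subrelation.wf (fun h => h.2) (InvImage.wf π wellFounded_lt)
  exact hwf.iff_of_iff_forall_not (by simpa only [and_imp] using hEO)
    (by simpa only [and_imp] using hM)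

/-- if `EO` satisfies the recursive specification of the edge oracle
(`EO e` holds iff no incident edge of strictly smaller rank has `EO`), and `M` is the
greedy maximal matching w.r.t. the ranks `π` (characterized by the same fixpoint
property of greedily processing edges in increasing rank order), then
`EO e = true` iff `e ∈ RGMM(H, π)`. -/
theorem stmt3 {V E : Type*} (ends : E → V × V) (π : E → ℕ)
    (hπ : Function.Injective π)
    (EO : E → Prop)
    (hEO : ∀ e, EO e ↔ ∀ f, Incident ends e f → π f < π e → ¬ EO f)
    (M : Set E)
    (hM : ∀ e, e ∈ M ↔ ∀ f, Incident ends e f → π f < π e → f ∉ M) :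
    ∀ e, EO e ↔ e ∈ M :=
  stmt3_general ends π EO hEO M hM
end

section
/- Let π₁, π₂ be two permutations of the edges of a multigraph H and let P⃗₁ = (e⃗_{k₁}, ..., e⃗₁) and P⃗₂ = (e⃗'_{k₂}, ..., e⃗'₁) be query paths of the local RGMM oracle under π₁ and π₂ respectively, both ending at the same directed edge e⃗ = e⃗₁ = e⃗'₁, with f(π₁, P⃗₁) = f(π₂, P⃗₂). Suppose e_j = e'_j for all j ≤ i, e_{i+1} ≠ e'_{i+1}, and π₁(e_i) ≤ π₂(e_i). Then π₂(e_{i+1}) = π₁(e_i) < π₂(e_i), and for every edge ê with min(π₁(ê), π₂(ê)) < π₁(e_i) we have π₁(ê) = π₂(ê). -/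
def IsGreedyMM {V E : Type*} (ends : E → V × V) (π : E → ℕ) (M : Set E) : Prop :=
  ∀ e, e ∈ M ↔ ∀ f, Incident ends e f → π f < π e → f ∉ M

/-- Query path of the local RGMM oracle, in stack order (first-stored edge first, ranks
strictly decreasing along the list; the last entry is the deepest edge `e₁`). -/
def IsQueryPath {V E : Type*} (ends : E → V × V) (π : E → ℕ) (M : Set E)
    (P : List E) : Prop :=
  P ≠ [] ∧ P.Chain' (fun a b => Incident ends a b ∧ π b < π a ∧
    ∀ f, Incident ends a f → π f < π b → f ∉ M)

/-- The cyclic-shift map `f(π, P)`: each edge of `P` gets the rank of the next edge of `P`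
in list order (the last edge gets the rank of the first); other edges keep their rank. -/
def cyclicShift {E : Type*} [DecidableEq E] (π : E → ℕ) (P : List E) (x : E) : ℕ :=
  if x ∈ P then
    if h : P.idxOf x + 1 < P.length then π (P.get ⟨P.idxOf x + 1, h⟩)
    else π (P.getD 0 x)
  else π x
/-!
Read both query paths from their common end, so that ranks increase along `P.reverse` and the
cyclic shift gives the edge at position `m + 1` the rank of the edge at position `m`. Hence the
shifted rank of an edge at position `m` dominates the ranks of all edges below `m`: an edge
whose shifted rank is below the rank of the edge at position `k` sits at a position `≤ k`. Under
`π₂` the shift of `a = e_{i+1}` is `π₁(e_i) ≤ π₂(e_i) < π₂(e'_{i+1})`, so on `P₂` it could only be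
one of `e_1, …, e_i, e'_{i+1}`; hence `a ∉ P₂` and `π₂(a) = π₁(e_i)`. An edge of rank below
`π₁(e_i)` and `π₂(e_i)` either lies on the common prefix strictly below `e_i`, where both shifts
read its rank off the same next edge, or lies on neither path, where both shifts are the identity.
-/

section Ranks

variable {E : Type*} {π : E → ℕ} {L : List E}

theorem rank_lt_rank_iff_of_pairwise (hL : L.Pairwise (fun x y => π x < π y)) {m n : ℕ}
    {x y : E} (hx : L[m]? = some x) (hy : L[n]? = some y) : π x < π y ↔ m < n := by
  obtain ⟨hm, rfl⟩ := List.getElem?_eq_some_iff.mp hx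
  obtain ⟨hn, rfl⟩ := List.getElem?_eq_some_iff.mp hy
  have hmono := List.pairwise_iff_getElem.mp hL
  refine ⟨fun h => ?_, hmono m n hm hn⟩
  by_contra hnm
  rcases (not_lt.mp hnm).lt_or_eq with hlt | rfl
  · exact lt_asymm h (hmono n m hn hm hlt)
  · exact lt_irrefl _ h

theorem rank_le_rank_iff_of_pairwise (hL : L.Pairwise (fun x y => π x < π y)) {m n : ℕ}
    {x y : E} (hx : L[m]? = some x) (hy : L[n]? = some y) : π x ≤ π y ↔ m ≤ n := by
  simpa only [not_lt] using (rank_lt_rank_iff_of_pairwise hL hy hx).not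

theorem exists_getElem?_eq_some_of_le {m n : ℕ} {x : E} (hx : L[n]? = some x) (hmn : m ≤ n) :
    ∃ y, L[m]? = some y :=
  ⟨_, List.getElem?_eq_getElem (hmn.trans_lt (List.getElem?_eq_some_iff.mp hx).1)⟩

theorem nodup_of_pairwise_rank_lt (hL : L.Pairwise (fun x y => π x < π y)) : L.Nodup :=
  hL.imp fun h hxy => h.ne (congrArg π hxy)

theorem IsQueryPath.pairwise_reverse {V : Type*} {ends : E → V × V} {M : Set E}
    (hP : IsQueryPath ends π M L) : L.reverse.Pairwise (fun x y => π x < π y) := by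
  have hchain : (L.map π).IsChain (· > ·) := (List.isChain_map π).mpr (hP.2.imp fun _ _ h => h.2.1)
  exact List.pairwise_reverse.mpr (List.pairwise_map.mp hchain.pairwise)

end Ranks

section CyclicShift

variable {E : Type*} [DecidableEq E] (π : E → ℕ) {P : List E}

theorem cyclicShift_of_notMem {x : E} (hx : x ∉ P) : cyclicShift π P x = π x := by
  simp [cyclicShift, hx]

theorem cyclicShift_getElem (hP : P.Nodup) {k : ℕ} (hk : k + 1 < P.length) :
    cyclicShift π P P[k] = π P[k + 1] := by
  simp [cyclicShift, List.getElem_mem, hP.idxOf_getElem k, hk]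

theorem cyclicShift_of_reverse_getElem? (hP : P.Nodup) {m : ℕ} {x y : E}
    (hx : P.reverse[m + 1]? = some x) (hy : P.reverse[m]? = some y) :
    cyclicShift π P x = π y := by
  obtain ⟨hm, rfl⟩ := List.getElem?_eq_some_iff.mp hx
  obtain ⟨-, rfl⟩ := List.getElem?_eq_some_iff.mp hy
  rw [List.length_reverse] at hm
  simp only [List.getElem_reverse]
  convert cyclicShift_getElem π hP (k := P.length - 1 - (m + 1)) (by omega) using 3
  omega

theorem index_le_of_cyclicShift_lt (hP : P.reverse.Pairwise (fun x y => π x < π y))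
    {m k : ℕ} {x y : E} (hx : P.reverse[m]? = some x) (hy : P.reverse[k]? = some y)
    (h : cyclicShift π P x < π y) : m ≤ k := by
  by_contra! hkm
  obtain ⟨m, rfl⟩ : ∃ m', m = m' + 1 := ⟨m - 1, by omega⟩
  obtain ⟨z, hz⟩ := exists_getElem?_eq_some_of_le hx m.le_succ
  have hnd : P.Nodup := List.nodup_reverse.mp (nodup_of_pairwise_rank_lt hP)
  rw [cyclicShift_of_reverse_getElem? π hnd hx hz] at h
  exact h.not_ge ((rank_le_rank_iff_of_pairwise hP hy hz).mpr (by omega))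

end CyclicShift

section TwoPaths

variable {E : Type*} [DecidableEq E] {π₁ π₂ : E → ℕ} {P₁ P₂ : List E} {n : ℕ} {c : E}

theorem rank_eq_of_rank_lt_min_of_cyclicShift_eq
    (hP₁ : P₁.reverse.Pairwise (fun x y => π₁ x < π₁ y))
    (hP₂ : P₂.reverse.Pairwise (fun x y => π₂ x < π₂ y))
    (hf : cyclicShift π₁ P₁ = cyclicShift π₂ P₂)
    (hagree : ∀ j ≤ n, P₁.reverse[j]? = P₂.reverse[j]?) (hc : P₁.reverse[n]? = some c)
    {g : E} (hg : π₁ g < min (π₁ c) (π₂ c)) : π₁ g = π₂ g := by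
  have hnd₁ : P₁.Nodup := List.nodup_reverse.mp (nodup_of_pairwise_rank_lt hP₁)
  have hnd₂ : P₂.Nodup := List.nodup_reverse.mp (nodup_of_pairwise_rank_lt hP₂)
  by_cases hg₁ : g ∈ P₁
  · obtain ⟨m, hm⟩ := List.mem_iff_getElem?.mp (List.mem_reverse.mpr hg₁)
    have hmn : m < n := (rank_lt_rank_iff_of_pairwise hP₁ hm hc).mp (lt_min_iff.mp hg).1
    obtain ⟨x, hx⟩ := exists_getElem?_eq_some_of_le hc hmn
    calc π₁ g = cyclicShift π₁ P₁ x := (cyclicShift_of_reverse_getElem? π₁ hnd₁ hx hm).symm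
      _ = cyclicShift π₂ P₂ x := by rw [hf]
      _ = π₂ g := cyclicShift_of_reverse_getElem? π₂ hnd₂ ((hagree (m + 1) hmn).symm.trans hx)
          ((hagree m hmn.le).symm.trans hm)
  · have hshift : cyclicShift π₂ P₂ g = π₁ g := by rw [← hf, cyclicShift_of_notMem π₁ hg₁]
    by_cases hg₂ : g ∈ P₂
    · obtain ⟨m, hm⟩ := List.mem_iff_getElem?.mp (List.mem_reverse.mpr hg₂)
      have hmn : m ≤ n := index_le_of_cyclicShift_lt π₂ hP₂ hm ((hagree n le_rfl).symm.trans hc)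
        (hshift ▸ (lt_min_iff.mp hg).2)
      exact absurd (List.mem_reverse.mp (List.mem_of_getElem? ((hagree m hmn).trans hm))) hg₁
    · rw [← hshift, cyclicShift_of_notMem π₂ hg₂]

theorem rank_eq_of_first_disagreement
    (hP₁ : P₁.reverse.Pairwise (fun x y => π₁ x < π₁ y))
    (hP₂ : P₂.reverse.Pairwise (fun x y => π₂ x < π₂ y))
    (hf : cyclicShift π₁ P₁ = cyclicShift π₂ P₂)
    (hagree : ∀ j ≤ n, P₁.reverse[j]? = P₂.reverse[j]?) (hc : P₁.reverse[n]? = some c)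
    {a b : E} (ha : P₁.reverse[n + 1]? = some a) (hb : P₂.reverse[n + 1]? = some b)
    (hab : a ≠ b) (hle : π₁ c ≤ π₂ c) : π₂ a = π₁ c := by
  have hnd₁ : P₁.Nodup := List.nodup_reverse.mp (nodup_of_pairwise_rank_lt hP₁)
  have hshift : cyclicShift π₂ P₂ a = π₁ c := by
    rw [← hf, cyclicShift_of_reverse_getElem? π₁ hnd₁ ha hc]
  by_cases ha₂ : a ∈ P₂
  · obtain ⟨m, hm⟩ := List.mem_iff_getElem?.mp (List.mem_reverse.mpr ha₂)
    have hcb : π₂ c < π₂ b :=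
      (rank_lt_rank_iff_of_pairwise hP₂ ((hagree n le_rfl).symm.trans hc) hb).mpr n.lt_succ_self
    have hmn : m ≤ n + 1 := index_le_of_cyclicShift_lt π₂ hP₂ hm hb (hshift ▸ hle.trans_lt hcb)
    rcases hmn.lt_or_eq with hlt | rfl
    · have hm₁ : P₁.reverse[m]? = some a := (hagree m (by omega)).trans hm
      exact absurd ((rank_lt_rank_iff_of_pairwise hP₁ hm₁ ha).mpr hlt) (lt_irrefl _)
    · exact absurd (Option.some_injective _ (hm.symm.trans hb)) hab
  · rw [← hshift, cyclicShift_of_notMem π₂ ha₂]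

end TwoPaths

-- `P.reverse[j]?` is `e_{j+1}`, counted from the common end;
-- `a = e_{i+1}`, `b = e'_{i+1}`, `c = e_i`.
theorem stmt18_general {V E : Type*} [DecidableEq E] (ends : E → V × V)
    (π₁ π₂ : E → ℕ) (hi2 : Function.Injective π₂)
    (M₁ M₂ : Set E)
    (P₁ P₂ : List E)
    (hP₁ : IsQueryPath ends π₁ M₁ P₁) (hP₂ : IsQueryPath ends π₂ M₂ P₂)
    (hf : cyclicShift π₁ P₁ = cyclicShift π₂ P₂)
    (i : ℕ) (hi : 1 ≤ i)
    (hagree : ∀ j, j < i → P₁.reverse[j]? = P₂.reverse[j]?)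
    (a b c : E)
    (ha : P₁.reverse[i]? = some a) (hb : P₂.reverse[i]? = some b) (hab : a ≠ b)
    (hc : P₁.reverse[i - 1]? = some c)
    (hle : π₁ c ≤ π₂ c) :
    π₂ a = π₁ c ∧ π₂ a < π₂ c ∧
      ∀ g : E, min (π₁ g) (π₂ g) < π₁ c → π₁ g = π₂ g := by
  have hP₁ := hP₁.pairwise_reverse
  have hP₂ := hP₂.pairwise_reverse
  obtain ⟨n, rfl⟩ : ∃ n, i = n + 1 := ⟨i - 1, by omega⟩
  rw [Nat.add_sub_cancel] at hc
  have hagree' : ∀ j ≤ n, P₁.reverse[j]? = P₂.reverse[j]? := fun j hj => hagree j (by omega)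
  have hc₂ : P₂.reverse[n]? = some c := (hagree n n.lt_succ_self).symm.trans hc
  have hca : π₁ c < π₁ a := (rank_lt_rank_iff_of_pairwise hP₁ hc ha).mpr n.lt_succ_self
  have h2a : π₂ a = π₁ c := rank_eq_of_first_disagreement hP₁ hP₂ hf hagree' hc ha hb hab hle
  have hcc : π₁ c < π₂ c :=
    hle.lt_of_ne fun h => hca.ne' (congrArg π₁ (hi2 (h2a.trans h)))
  refine ⟨h2a, h2a ▸ hcc, fun g hg => ?_⟩
  rcases min_lt_iff.mp hg with hg₁ | hg₂
  · exact rank_eq_of_rank_lt_min_of_cyclicShift_eq hP₁ hP₂ hf hagree' hc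
      (lt_min hg₁ (hg₁.trans hcc))
  · exact (rank_eq_of_rank_lt_min_of_cyclicShift_eq hP₂ hP₁ hf.symm
      (fun j hj => (hagree' j hj).symm) hc₂ (lt_min (hg₂.trans hcc) hg₂)).symm

/-- let `P₁ = (e_{k₁}, …, e₁)` and `P₂ = (e'_{k₂}, …, e'₁)` be query paths
under `π₁`, `π₂` ending at the same edge `e = e₁ = e'₁`, with `f(π₁,P₁) = f(π₂,P₂)`.
(Here `P.reverse[j]?` is the `(j+1)`-st edge from the end, i.e. `e_{j+1}`.) Suppose
`e_j = e'_j` for all `j ≤ i`, `e_{i+1} ≠ e'_{i+1}` (`a = e_{i+1}`, `b = e'_{i+1}`,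
`c = e_i`), and `π₁(e_i) ≤ π₂(e_i)`. Then `π₂(e_{i+1}) = π₁(e_i) < π₂(e_i)`, and every
edge `ê` with `min(π₁(ê), π₂(ê)) < π₁(e_i)` satisfies `π₁(ê) = π₂(ê)`. -/
theorem stmt18 {V E : Type*} [DecidableEq E] (ends : E → V × V)
    (π₁ π₂ : E → ℕ) (hi1 : Function.Injective π₁) (hi2 : Function.Injective π₂)
    (hrange : Set.range π₁ = Set.range π₂)
    (M₁ M₂ : Set E) (hM₁ : IsGreedyMM ends π₁ M₁) (hM₂ : IsGreedyMM ends π₂ M₂)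
    (e : E) (P₁ P₂ : List E)
    (hP₁ : IsQueryPath ends π₁ M₁ P₁) (hP₂ : IsQueryPath ends π₂ M₂ P₂)
    (hend₁ : P₁.getLast? = some e) (hend₂ : P₂.getLast? = some e)
    (hf : cyclicShift π₁ P₁ = cyclicShift π₂ P₂)
    (i : ℕ) (hi : 1 ≤ i)
    (hagree : ∀ j, j < i → P₁.reverse[j]? = P₂.reverse[j]?)
    (a b c : E)
    (ha : P₁.reverse[i]? = some a) (hb : P₂.reverse[i]? = some b) (hab : a ≠ b)
    (hc : P₁.reverse[i - 1]? = some c)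
    (hle : π₁ c ≤ π₂ c) :
    π₂ a = π₁ c ∧ π₂ a < π₂ c ∧
      ∀ g : E, min (π₁ g) (π₂ g) < π₁ c → π₁ g = π₂ g :=
  stmt18_general ends π₁ π₂ hi2 M₁ M₂ P₁ P₂ hP₁ hP₂ hf i hi hagree a b c ha hb hab hc hle
end
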